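/- For every n ≥ 1 and every p in {1, …, 2^{n-1}}, there exists an integer r with 0 ≤ r ≤ per_{n-1}(p) such that, for all q with 1 ≤ q ≤ r, one has p *_n q = p *_{n-1} q, and for all q with r < q ≤ per_{n-1}(p), one has p *_n q = p *_{n-1} q + 2^{n-1}. -/

import Mathlib

/-- `op` is the Laver table operation on `{1, …, 2^n}`: it maps the set to itself,
satisfies `x * 1 = x + 1` for `x < 2^n`, `2^n * 1 = 1`, and
`x * (y * 1) = (x * y) * (x * 1)`. -/
def IsLaverOp (n : ℕ) (op : ℕ → ℕ → ℕ) : Prop :=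
  (∀ x y, 1 ≤ x → x ≤ 2 ^ n → 1 ≤ y → y ≤ 2 ^ n → 1 ≤ op x y ∧ op x y ≤ 2 ^ n) ∧
  (∀ x, 1 ≤ x → x < 2 ^ n → op x 1 = x + 1) ∧
  (op (2 ^ n) 1 = 1) ∧
  (∀ x y, 1 ≤ x → x ≤ 2 ^ n → 1 ≤ y → y ≤ 2 ^ n → op x (op y 1) = op (op x y) (op x 1))

/-!
Reduction `x ↦ x mod 2^(n-1)` (with representatives in `{1, …, 2^(n-1)}`) is a homomorphism
`A_n → A_(n-1)`, so `p *_n q` is either `p *_(n-1) q` or `p *_(n-1) q + 2^(n-1)`. Along a row of a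
Laver table the entries increase strictly until they reach `2^n`; hence for `q` below the period
of `p` in `A_(n-1)`, once `p *_n q` has the shifted value, so has `p *_n (q + 1)`: the
unshifted value `p *_(n-1) (q + 1) ≤ 2^(n-1)` is too small. The shifted positions therefore
form a final segment of `{1, …, per_(n-1)(p)}`.
-/

theorem Nat.exists_threshold_of_succ {P : ℕ → Prop} {N : ℕ}
    (hP : ∀ q, 1 ≤ q → q < N → P q → P (q + 1)) :
    ∃ r ≤ N, (∀ q, 1 ≤ q → q ≤ r → ¬ P q) ∧ ∀ q, r < q → q ≤ N → P q := by
  classical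
  have hfinal : ∃ r, ∀ q, r < q → q ≤ N → P q := ⟨N, fun q hq hqN => absurd hqN (by omega)⟩
  refine ⟨Nat.find hfinal, Nat.find_min' hfinal fun q hq hqN => absurd hqN (by omega),
    fun q hq1 hqr hPq => ?_, Nat.find_spec hfinal⟩
  have hfrom_q : ∀ q', q - 1 < q' → q' ≤ N → P q' := by
    intro q' hq' hq'N
    induction q', (show q ≤ q' by omega) using Nat.le_induction with
    | base => exact hPq
    | succ q' hqq' ih => exact hP q' (by omega) (by omega) (ih (by omega) (by omega))
  exact absurd (Nat.find_min' hfinal hfrom_q) (by omega)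

namespace IsLaverOp

variable {n : ℕ} {op : ℕ → ℕ → ℕ}

theorem op_mem (h : IsLaverOp n op) {x y : ℕ} (hx1 : 1 ≤ x) (hx2 : x ≤ 2 ^ n)
    (hy1 : 1 ≤ y) (hy2 : y ≤ 2 ^ n) : 1 ≤ op x y ∧ op x y ≤ 2 ^ n :=
  h.1 x y hx1 hx2 hy1 hy2

theorem op_one (h : IsLaverOp n op) {x : ℕ} (hx1 : 1 ≤ x) (hx2 : x < 2 ^ n) : op x 1 = x + 1 :=
  h.2.1 x hx1 hx2

theorem two_pow_op_one (h : IsLaverOp n op) : op (2 ^ n) 1 = 1 :=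
  h.2.2.1

theorem op_op_one (h : IsLaverOp n op) {x y : ℕ} (hx1 : 1 ≤ x) (hx2 : x ≤ 2 ^ n)
    (hy1 : 1 ≤ y) (hy2 : y ≤ 2 ^ n) : op x (op y 1) = op (op x y) (op x 1) :=
  h.2.2.2 x y hx1 hx2 hy1 hy2

theorem op_succ (h : IsLaverOp n op) {x q : ℕ} (hx1 : 1 ≤ x) (hx2 : x < 2 ^ n)
    (hq1 : 1 ≤ q) (hq2 : q < 2 ^ n) : op x (q + 1) = op (op x q) (x + 1) := by
  rw [← h.op_one hq1 hq2, h.op_op_one hx1 hx2.le hq1 hq2.le, h.op_one hx1 hx2]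

theorem two_pow_op (h : IsLaverOp n op) {q : ℕ} (hq1 : 1 ≤ q) (hq2 : q ≤ 2 ^ n) :
    op (2 ^ n) q = q := by
  induction q, hq1 using Nat.le_induction with
  | base => exact h.two_pow_op_one
  | succ q hq ih =>
    rw [← h.op_one hq (by omega), h.op_op_one Nat.one_le_two_pow le_rfl hq (by omega),
      ih (by omega), h.two_pow_op_one]

/-- Descending induction on the row `x`: `x *_n (q + 1) = (x *_n q) *_n (x + 1)` lies in a row
strictly above `x` unless `x *_n q = 2^n`. -/
theorem lt_op (h : IsLaverOp n op) {x q : ℕ} (hx1 : 1 ≤ x) (hx2 : x < 2 ^ n)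
    (hq1 : 1 ≤ q) (hq2 : q ≤ 2 ^ n) : x < op x q := by
  induction q, hq1 using Nat.le_induction with
  | base => rw [h.op_one hx1 hx2]; omega
  | succ q hq ih =>
    have hxq : x < op x q := ih (by omega)
    rw [h.op_succ hx1 hx2 hq (by omega)]
    rcases (h.op_mem hx1 hx2.le hq (by omega)).2.eq_or_lt with htop | hlt
    · rw [htop, h.two_pow_op (by omega) (by omega)]; omega
    · exact hxq.trans (h.lt_op (by omega) hlt (by omega) (by omega))
termination_by 2 ^ n - x

theorem op_lt_op_succ (h : IsLaverOp n op) {x q : ℕ} (hx1 : 1 ≤ x) (hx2 : x < 2 ^ n)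
    (hq1 : 1 ≤ q) (hq2 : q < 2 ^ n) (hxq : op x q < 2 ^ n) : op x q < op x (q + 1) := by
  have hx_lt := h.lt_op hx1 hx2 hq1 hq2.le
  rw [h.op_succ hx1 hx2 hq1 hq2]
  exact h.lt_op (by omega) hxq (by omega) (by omega)

/-- Every row reaches `2^n`: otherwise it would increase strictly all the way, and
`x *_n 2^n ≥ x + 2^n`. -/
theorem exists_op_eq_two_pow (h : IsLaverOp n op) {x : ℕ} (hx1 : 1 ≤ x) (hx2 : x ≤ 2 ^ n) :
    ∃ q, 1 ≤ q ∧ q ≤ 2 ^ n ∧ op x q = 2 ^ n := by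
  rcases hx2.eq_or_lt with rfl | hx2
  · exact ⟨2 ^ n, Nat.one_le_two_pow, le_rfl, h.two_pow_op Nat.one_le_two_pow le_rfl⟩
  by_contra! hne
  have hgrow : ∀ q, 1 ≤ q → q ≤ 2 ^ n → x + q ≤ op x q := by
    intro q hq1
    induction q, hq1 using Nat.le_induction with
    | base => intro _; rw [h.op_one hx1 hx2]
    | succ q hq ih =>
      intro hq2
      have hxq_lt : op x q < 2 ^ n :=
        lt_of_le_of_ne (h.op_mem hx1 hx2.le hq (by omega)).2 (hne q hq (by omega))
      have := h.op_lt_op_succ hx1 hx2 hq (by omega) hxq_lt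
      have := ih (by omega)
      omega
  have := hgrow (2 ^ n) Nat.one_le_two_pow le_rfl
  have := (h.op_mem hx1 hx2.le Nat.one_le_two_pow le_rfl).2
  omega

end IsLaverOp

def laverProj (m x : ℕ) : ℕ := if x ≤ 2 ^ m then x else x - 2 ^ m

section laverProj

variable {m : ℕ}

theorem laverProj_of_le {x : ℕ} (hx : x ≤ 2 ^ m) : laverProj m x = x := if_pos hx

theorem laverProj_of_lt {x : ℕ} (hx : 2 ^ m < x) : laverProj m x = x - 2 ^ m := if_neg hx.not_ge

theorem laverProj_mem {x : ℕ} (hx1 : 1 ≤ x) (hx2 : x ≤ 2 ^ (m + 1)) :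
    1 ≤ laverProj m x ∧ laverProj m x ≤ 2 ^ m := by
  unfold laverProj; split <;> omega

theorem laverProj_two_pow_succ : laverProj m (2 ^ (m + 1)) = 2 ^ m := by
  rw [laverProj_of_lt (Nat.pow_lt_pow_succ one_lt_two), pow_succ]; omega

variable {opn opm : ℕ → ℕ → ℕ}

theorem laverProj_succ (hopm : IsLaverOp m opm) {y : ℕ} (hy1 : 1 ≤ y) (hy2 : y < 2 ^ (m + 1)) :
    laverProj m (y + 1) = opm (laverProj m y) 1 := by
  rcases lt_trichotomy y (2 ^ m) with hy | rfl | hy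
  · rw [laverProj_of_le hy, laverProj_of_le hy.le, hopm.op_one hy1 hy]
  · rw [laverProj_of_le le_rfl, laverProj_of_lt (Nat.lt_succ_self _), hopm.two_pow_op_one]
    omega
  · rw [laverProj_of_lt hy, laverProj_of_lt (Nat.lt_succ_of_lt hy),
      hopm.op_one (by omega) (by omega)]
    omega

/-- Descending induction on `x` and ascending induction on `q`, through
`opn x (q + 1) = opn (opn x q) (x + 1)` with `opn x q > x`. -/
theorem laverProj_op (hopn : IsLaverOp (m + 1) opn) (hopm : IsLaverOp m opm) {x q : ℕ}
    (hx1 : 1 ≤ x) (hx2 : x ≤ 2 ^ (m + 1)) (hq1 : 1 ≤ q) (hq2 : q ≤ 2 ^ (m + 1)) :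
    laverProj m (opn x q) = opm (laverProj m x) (laverProj m q) := by
  rcases hx2.eq_or_lt with rfl | hx2
  · obtain ⟨hπq1, hπq2⟩ := laverProj_mem hq1 hq2
    rw [hopn.two_pow_op hq1 hq2, laverProj_two_pow_succ, hopm.two_pow_op hπq1 hπq2]
  induction q, hq1 using Nat.le_induction with
  | base =>
    rw [hopn.op_one hx1 hx2, laverProj_succ hopm hx1 hx2, laverProj_of_le Nat.one_le_two_pow]
  | succ q hq ih =>
    have hxq := hopn.op_mem hx1 hx2.le hq (by omega)
    have hx_lt := hopn.lt_op hx1 hx2 hq (by omega)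
    obtain ⟨hπx1, hπx2⟩ := laverProj_mem hx1 hx2.le
    obtain ⟨hπq1, hπq2⟩ := laverProj_mem hq (by omega : q ≤ 2 ^ (m + 1))
    rw [hopn.op_succ hx1 hx2 hq (by omega),
      laverProj_op hopn hopm hxq.1 hxq.2 (by omega) (by omega), ih (by omega),
      laverProj_succ hopm hx1 hx2, laverProj_succ hopm hq (by omega),
      hopm.op_op_one hπx1 hπx2 hπq1 hπq2]
termination_by 2 ^ (m + 1) - x

theorem op_eq_or_eq_add (hopn : IsLaverOp (m + 1) opn) (hopm : IsLaverOp m opm) {x q : ℕ}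
    (hx1 : 1 ≤ x) (hx2 : x ≤ 2 ^ m) (hq1 : 1 ≤ q) (hq2 : q ≤ 2 ^ m) :
    opn x q = opm x q ∨ opn x q = opm x q + 2 ^ m := by
  have hproj := laverProj_op hopn hopm hx1 (by omega) hq1 (by omega)
  rw [laverProj_of_le hx2, laverProj_of_le hq2] at hproj
  have := hopn.op_mem hx1 (by omega) hq1 (by omega)
  unfold laverProj at hproj
  split at hproj <;> omega

theorem op_succ_eq_add_of_op_eq_add (hopn : IsLaverOp (m + 1) opn) (hopm : IsLaverOp m opm)
    {x q : ℕ} (hx1 : 1 ≤ x) (hx2 : x ≤ 2 ^ m) (hq1 : 1 ≤ q) (hq2 : q < 2 ^ m)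
    (hxq : opm x q < 2 ^ m) (hshift : opn x q = opm x q + 2 ^ m) :
    opn x (q + 1) = opm x (q + 1) + 2 ^ m := by
  have hinc := hopn.op_lt_op_succ hx1 (by omega) hq1 (by omega) (by omega)
  have := (hopm.op_mem hx1 hx2 (by omega) (by omega : q + 1 ≤ 2 ^ m)).2
  have := (hopm.op_mem hx1 hx2 hq1 hq2.le).1
  rcases op_eq_or_eq_add hopn hopm hx1 hx2 (by omega) (by omega : q + 1 ≤ 2 ^ m) with h | h
  · omega
  · exact h

end laverProj

/-- Threshold: for `p ≤ 2^(n-1)` there is `0 ≤ r ≤ per_(n-1)(p)` such that the row of `p`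
in `A_n` coincides with its row in `A_(n-1)` up to position `r`, and is shifted
by `2^(n-1)` from position `r + 1` to `per_(n-1)(p)`.  Here the period `per_(n-1)(p)`
is the least `q ≥ 1` with `p *_(n-1) q = 2^(n-1)`. -/
theorem laver_threshold (n : ℕ) (hn : 1 ≤ n)
    (opn opm : ℕ → ℕ → ℕ) (hopn : IsLaverOp n opn) (hopm : IsLaverOp (n - 1) opm)
    (p : ℕ) (hp1 : 1 ≤ p) (hp2 : p ≤ 2 ^ (n - 1))
    (per : ℕ) (hper : IsLeast {q : ℕ | 1 ≤ q ∧ opm p q = 2 ^ (n - 1)} per) :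
    ∃ r : ℕ, r ≤ per ∧
      (∀ q, 1 ≤ q → q ≤ r → opn p q = opm p q) ∧
      (∀ q, r < q → q ≤ per → opn p q = opm p q + 2 ^ (n - 1)) := by
  obtain ⟨m, rfl⟩ : ∃ m, n = m + 1 := ⟨n - 1, by omega⟩
  rw [Nat.add_sub_cancel] at hopm hp2 hper ⊢
  have hper_le : per ≤ 2 ^ m := by
    obtain ⟨q, hq1, hq2, hpq⟩ := hopm.exists_op_eq_two_pow hp1 hp2
    exact (hper.2 ⟨hq1, hpq⟩).trans hq2
  have hbelow_per : ∀ q, 1 ≤ q → q < per → opm p q < 2 ^ m := fun q hq1 hq =>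
    lt_of_le_of_ne (hopm.op_mem hp1 hp2 hq1 (by omega)).2
      fun hpq => absurd (hper.2 ⟨hq1, hpq⟩) (by omega)
  obtain ⟨r, hr, hunshifted, hshifted⟩ :=
    Nat.exists_threshold_of_succ (P := fun q => opn p q = opm p q + 2 ^ m) (N := per)
      fun q hq1 hq => op_succ_eq_add_of_op_eq_add hopn hopm hp1 hp2 hq1 (by omega)
        (hbelow_per q hq1 hq)
  exact ⟨r, hr, fun q hq1 hqr =>
    (op_eq_or_eq_add hopn hopm hp1 hp2 hq1 (by omega)).resolve_right (hunshifted q hq1 hqr),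
    hshifted⟩
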